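/- (Proposition 2) For every fixed t_f ≥ 0, the auxiliary value function ϑ(·,t_f,·) is Lipschitz continuous: for all r₀, r̂₀ ∈ ℝ⁷ and z₀, ẑ₀ ∈ ℝ^p, |ϑ(r₀,t_f,z₀) − ϑ(r̂₀,t_f,ẑ₀)| ≤ C_r·‖r₀ − r̂₀‖ + ‖z₀ − ẑ₀‖, where C_r = max( L_g·e^{t_f·L_f}, L_ν·e^{t_f·L_f}, L_t·e^{t_f·L_f} + L_r·(e^{t_f·L_f} − 1)/L_f ). -/

import Mathlib

open Real MeasureTheory Set

noncomputable section

/-- The state space ℝ⁷. -/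
abbrev St : Type := Fin 7 → ℝ

/-- The control value space ℝ³ (incidence angle, sideslip angle, thrust). -/
abbrev Ctrl : Type := ℝ × ℝ × ℝ

/-- The compact control set U = [-π,π] × [-π/2,π/2] × [0,T_max]. -/
def ctrlSet (Tmax : ℝ) : Set Ctrl :=
  Icc (-π) π ×ˢ Icc (-(π / 2)) (π / 2) ×ˢ Icc 0 Tmax

/-- `(r, u)` is a trajectory-control pair on `[a, b]` starting at `r₀`:
`u` is a measurable policy with values in the control set, `r` is (absolutely)
continuous on `[a, b]`, `r a = r₀` and `r` solves `ṙ = f(r, u)` in integral form. -/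
def IsTrajOn (f : St → Ctrl → St) (Tmax : ℝ) (r₀ : St) (a b : ℝ)
    (r : ℝ → St) (u : ℝ → Ctrl) : Prop :=
  ContinuousOn r (Icc a b) ∧ Measurable u ∧ (∀ t, u t ∈ ctrlSet Tmax) ∧
  r a = r₀ ∧ ∀ t ∈ Icc a b, r t = r₀ + ∫ s in a..t, f (r s) (u s)

/-- `(r, u) ∈ Π_{r₀, t_f}`. -/
def IsTraj (f : St → Ctrl → St) (Tmax : ℝ) (r₀ : St) (tf : ℝ)
    (r : ℝ → St) (u : ℝ → Ctrl) : Prop :=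
  IsTrajOn f Tmax r₀ (-tf) 0 r u

/-- `z` is the auxiliary state on `[-t_f, 0]` with `ż(s) = −J_r(r(s), u(s))` a.e.
and terminal condition `z(0) = z₀`, encoded in integral form. -/
def IsAux {p : ℕ} (Jr : St → Ctrl → Fin p → ℝ) (tf : ℝ)
    (r : ℝ → St) (u : ℝ → Ctrl) (z₀ : Fin p → ℝ) (z : ℝ → Fin p → ℝ) : Prop :=
  ContinuousOn z (Icc (-tf) 0) ∧ z 0 = z₀ ∧
  ∀ t ∈ Icc (-tf) 0, z t = z₀ + ∫ s in t..0, Jr (r s) (u s)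

/-- The cost `max( max_i [J_t^i(r(0)) − z^i(−t_f)], ν(r(0)), max_{s∈[-t_f,0]} g(r(s)) )`. -/
def auxCost {p : ℕ} (g ν : St → ℝ) (Jt : St → Fin p → ℝ) (tf : ℝ)
    (r : ℝ → St) (z : ℝ → Fin p → ℝ) : ℝ :=
  max (⨆ i, (Jt (r 0) i - z (-tf) i))
    (max (ν (r 0)) (sSup ((fun s => g (r s)) '' Icc (-tf) 0)))

/-- The auxiliary value function ϑ(r₀, t_f, z₀). -/
def auxValueFn {p : ℕ} (f : St → Ctrl → St) (Tmax : ℝ) (g ν : St → ℝ)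
    (Jt : St → Fin p → ℝ) (Jr : St → Ctrl → Fin p → ℝ)
    (r₀ : St) (tf : ℝ) (z₀ : Fin p → ℝ) : ℝ :=
  sInf {y | ∃ r u z, IsTraj f Tmax r₀ tf r u ∧ IsAux Jr tf r u z₀ z ∧
    y = auxCost g ν Jt tf r z}

/-!
The Lipschitz bound on `f` is uniform in both controls, so on `U` the dynamics do not depend on
the control. Hence every admissible triple from `(r̂₀, ẑ₀)` is matched by one from `(r₀, z₀)` with
the same control: Grönwall bounds the state gap by `‖r₀ - r̂₀‖ e^{L_f (t + t_f)}`, integrating the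
Lipschitz bound of `J_r` bounds the gap of `z` at `-t_f` by
`‖z₀ - ẑ₀‖ + L_r ‖r₀ - r̂₀‖ (e^{t_f L_f} - 1) / L_f`, and then each of the three terms of the cost
moves by at most the corresponding entry of `C_r` times `‖r₀ - r̂₀‖`, plus `‖z₀ - ẑ₀‖`. Passing to
infima gives one inequality, and symmetry the other.
-/

theorem nonneg_of_norm_sub_le_mul {E F : Type*} [NormedAddCommGroup E] [Nontrivial E]
    [SeminormedAddCommGroup F] {φ : E → F} {L : ℝ} (h : ∀ a b, ‖φ a - φ b‖ ≤ L * ‖a - b‖) :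
    0 ≤ L := by
  obtain ⟨x, hx⟩ := exists_ne (0 : E)
  have := (norm_nonneg _).trans (h x 0)
  rw [sub_zero] at this
  exact nonneg_of_mul_nonneg_left this (norm_pos_iff.mpr hx)

theorem continuous_of_norm_sub_le_mul {E F : Type*} [SeminormedAddCommGroup E]
    [SeminormedAddCommGroup F] {φ : E → F} {L : ℝ} (h : ∀ a b, ‖φ a - φ b‖ ≤ L * ‖a - b‖) :
    Continuous φ :=
  (LipschitzWith.of_dist_le' fun a b => by simpa only [dist_eq_norm] using h a b).continuous

theorem norm_sub_le_mul_exp_of_integral_eq {E : Type*} [NormedAddCommGroup E] [NormedSpace ℝ E]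
    [CompleteSpace E] {F : E → E} {K : ℝ} (hF : ∀ x y, ‖F x - F y‖ ≤ K * ‖x - y‖)
    {a b : ℝ} {r₁ r₂ : ℝ → E} (h₁ : ContinuousOn r₁ (Icc a b)) (h₂ : ContinuousOn r₂ (Icc a b))
    (e₁ : ∀ t ∈ Icc a b, r₁ t = r₁ a + ∫ s in a..t, F (r₁ s))
    (e₂ : ∀ t ∈ Icc a b, r₂ t = r₂ a + ∫ s in a..t, F (r₂ s)) :
    ∀ t ∈ Icc a b, ‖r₁ t - r₂ t‖ ≤ ‖r₁ a - r₂ a‖ * exp (K * (t - a)) := by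
  intro t ht
  have hab : a ≤ b := ht.1.trans ht.2
  have hFc := continuous_of_norm_sub_le_mul hF
  -- extend `r₁, r₂` continuously to `ℝ`, so that the integrals are differentiable everywhere
  set R₁ := IccExtend hab ((Icc a b).domRestrict r₁)
  set R₂ := IccExtend hab ((Icc a b).domRestrict r₂)
  have hR₁ : Continuous (F ∘ R₁) := hFc.comp (continuous_IccExtend_iff.mpr h₁.domRestrict)
  have hR₂ : Continuous (F ∘ R₂) := hFc.comp (continuous_IccExtend_iff.mpr h₂.domRestrict)
  have hR : ∀ t ∈ Icc a b, ∀ s ∈ uIcc a t, R₁ s = r₁ s ∧ R₂ s = r₂ s := fun t ht s hs => by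
    rw [uIcc_of_le ht.1] at hs
    have hs' : s ∈ Icc a b := ⟨hs.1, hs.2.trans ht.2⟩
    simp only [R₁, R₂, IccExtend_of_mem hab _ hs', domRestrict_apply, and_self]
  set w : ℝ → E := fun t => (r₁ a - r₂ a) + ∫ s in a..t, (F (R₁ s) - F (R₂ s))
  have hw : ∀ t ∈ Icc a b, w t = r₁ t - r₂ t := fun t ht => by
    have hI₁ : ∫ s in a..t, F (r₁ s) = ∫ s in a..t, F (R₁ s) :=
      intervalIntegral.integral_congr fun s hs => by simp only [(hR t ht s hs).1]
    have hI₂ : ∫ s in a..t, F (r₂ s) = ∫ s in a..t, F (R₂ s) :=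
      intervalIntegral.integral_congr fun s hs => by simp only [(hR t ht s hs).2]
    have i₁ : IntervalIntegrable (fun s => F (R₁ s)) volume a t := hR₁.intervalIntegrable a t
    have i₂ : IntervalIntegrable (fun s => F (R₂ s)) volume a t := hR₂.intervalIntegrable a t
    rw [e₁ t ht, e₂ t ht, hI₁, hI₂]
    simp only [w, intervalIntegral.integral_sub i₁ i₂]
    abel
  have hw' : ∀ t, HasDerivAt w (F (R₁ t) - F (R₂ t)) t := fun t =>
    ((hR₁.sub hR₂).integral_hasStrictDerivAt a t).hasDerivAt.const_add _
  have hbound : ∀ t ∈ Ico a b, ‖F (R₁ t) - F (R₂ t)‖ ≤ K * ‖w t‖ + 0 := fun t ht => by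
    have ht' : t ∈ Icc a b := Ico_subset_Icc_self ht
    rw [hw t ht', ← (hR t ht' t right_mem_uIcc).1, ← (hR t ht' t right_mem_uIcc).2, add_zero]
    exact hF _ _
  have := norm_le_gronwallBound_of_norm_deriv_right_le
    (fun t _ => (hw' t).continuousAt.continuousWithinAt) (fun t _ => (hw' t).hasDerivWithinAt)
    (by simp [w] : ‖w a‖ ≤ ‖r₁ a - r₂ a‖) hbound t ht
  rwa [hw t ht, gronwallBound_ε0] at this

theorem IsCompact.integrableOn_comp_of_continuousOn_prod {X Y F : Type*}
    [PseudoMetricSpace X] [SecondCountableTopology X] [MeasurableSpace X] [BorelSpace X]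
    [PseudoMetricSpace Y] [SecondCountableTopology Y] [MeasurableSpace Y] [BorelSpace Y]
    [NormedAddCommGroup F] {φ : X → Y → F} {K : Set Y} {s : Set ℝ}
    (hs : IsCompact s) (hK : IsCompact K)
    (hφ : ContinuousOn (fun q : X × Y => φ q.1 q.2) (univ ×ˢ K))
    {r : ℝ → X} {u : ℝ → Y} (hr : ContinuousOn r s) (hu : Measurable u) (huK : ∀ t, u t ∈ K) :
    IntegrableOn (fun t => φ (r t) (u t)) s := by
  have hmeas : AEStronglyMeasurable (fun t => φ (r t) (u t)) (volume.restrict s) := by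
    have hpair : AEMeasurable (fun t => (r t, u t)) (volume.restrict s) :=
      (hr.aestronglyMeasurable hs.measurableSet).aemeasurable.prodMk hu.aemeasurable
    have hmem : ∀ t, (r t, u t) ∈ univ ×ˢ K := fun t => ⟨mem_univ _, huK t⟩
    exact (continuousOn_iff_continuous_domRestrict.mp hφ).comp_aestronglyMeasurable
      (hpair.subtype_mk (hfs := hmem)).aestronglyMeasurable
  obtain ⟨C, hC⟩ := ((hs.image_of_continuousOn hr).prod hK).exists_bound_of_continuousOn
    (hφ.mono (prod_mono (subset_univ _) le_rfl))
  refine Integrable.mono' (integrableOn_const hs.measure_lt_top.ne (C := C)) hmeas ?_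
  exact (ae_restrict_iff' hs.measurableSet).mpr
    (ae_of_all _ fun t ht => hC (r t, u t) ⟨mem_image_of_mem r ht, huK t⟩)

theorem iSup_le_iSup_add_norm_sub {ι : Type*} [Fintype ι] (v w : ι → ℝ) :
    ⨆ i, v i ≤ (⨆ i, w i) + ‖v - w‖ := by
  rcases isEmpty_or_nonempty ι with hι | hι
  · simp
  refine ciSup_le fun i => ?_
  have hw : w i ≤ ⨆ i, w i := le_ciSup (finite_range w).bddAbove i
  have hvw : v i - w i ≤ ‖v - w‖ := (le_abs_self _).trans (norm_le_pi_norm (v - w) i)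
  linarith

theorem csInf_le_csInf_add {S T : Set ℝ} {c : ℝ} (hS : BddBelow S) (hT : T.Nonempty)
    (h : ∀ y ∈ T, ∃ x ∈ S, x ≤ y + c) : sInf S ≤ sInf T + c := by
  rw [← sub_le_iff_le_add]
  refine le_csInf hT fun y hy => ?_
  obtain ⟨x, hx, hxy⟩ := h y hy
  linarith [csInf_le hS hx]

theorem integral_exp_mul_add_eq {L : ℝ} (hL : L ≠ 0) (T : ℝ) :
    ∫ s in (-T)..0, exp (L * (s + T)) = (exp (T * L) - 1) / L := by
  simp only [mul_add]
  rw [intervalIntegral.integral_comp_mul_add (fun s => exp s) hL, integral_exp, smul_eq_mul,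
    mul_zero, zero_add, mul_neg, neg_add_cancel, exp_zero, mul_comm T, div_eq_inv_mul]

theorem isCompact_ctrlSet (Tmax : ℝ) : IsCompact (ctrlSet Tmax) :=
  isCompact_Icc.prod (isCompact_Icc.prod isCompact_Icc)

section ControlSystem

variable {p : ℕ} {f : St → Ctrl → St} {Tmax Lf : ℝ} {tf : ℝ}

theorem apply_eq_of_mem_ctrlSet
    (hf_lip : ∀ r₁ r₂ u₁ u₂, u₁ ∈ ctrlSet Tmax → u₂ ∈ ctrlSet Tmax →
      ‖f r₁ u₁ - f r₂ u₂‖ ≤ Lf * ‖r₁ - r₂‖)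
    (x : St) {c c' : Ctrl} (hc : c ∈ ctrlSet Tmax) (hc' : c' ∈ ctrlSet Tmax) :
    f x c = f x c' := by
  simpa [sub_eq_zero] using hf_lip x x c c' hc hc'

theorem IsTraj.replace_ctrl
    (hf_lip : ∀ r₁ r₂ u₁ u₂, u₁ ∈ ctrlSet Tmax → u₂ ∈ ctrlSet Tmax →
      ‖f r₁ u₁ - f r₂ u₂‖ ≤ Lf * ‖r₁ - r₂‖)
    {r₀ : St} {r : ℝ → St} {u v : ℝ → Ctrl} (h : IsTraj f Tmax r₀ tf r u)
    (hv : Measurable v) (hvU : ∀ t, v t ∈ ctrlSet Tmax) : IsTraj f Tmax r₀ tf r v := by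
  obtain ⟨hr, -, huU, hr₀, heq⟩ := h
  refine ⟨hr, hv, hvU, hr₀, fun t ht => (heq t ht).trans ?_⟩
  rw [intervalIntegral.integral_congr fun s _ =>
    apply_eq_of_mem_ctrlSet hf_lip (r s) (huU s) (hvU s)]

theorem IsTraj.norm_sub_le_mul_exp
    (hf_lip : ∀ r₁ r₂ u₁ u₂, u₁ ∈ ctrlSet Tmax → u₂ ∈ ctrlSet Tmax →
      ‖f r₁ u₁ - f r₂ u₂‖ ≤ Lf * ‖r₁ - r₂‖)
    {r₀ rhat₀ : St} {r rhat : ℝ → St} {u uhat : ℝ → Ctrl}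
    (h : IsTraj f Tmax r₀ tf r u) (hhat : IsTraj f Tmax rhat₀ tf rhat uhat) :
    ∀ t ∈ Icc (-tf) 0, ‖r t - rhat t‖ ≤ ‖r₀ - rhat₀‖ * exp (Lf * (t + tf)) := by
  have hc := h.2.2.1 0
  have hF : ∀ x y, ‖f x (u 0) - f y (u 0)‖ ≤ Lf * ‖x - y‖ := fun x y => hf_lip x y _ _ hc hc
  have hautonomous : ∀ {q₀ : St} {q : ℝ → St} {v : ℝ → Ctrl}, IsTraj f Tmax q₀ tf q v →
      ∀ t ∈ Icc (-tf) 0, q t = q (-tf) + ∫ s in (-tf)..t, f (q s) (u 0) := fun hq t ht => by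
    rw [(hq.replace_ctrl hf_lip measurable_const fun _ => hc).2.2.2.2 t ht, hq.2.2.2.1]
  intro t ht
  simpa only [h.2.2.2.1, hhat.2.2.2.1, sub_neg_eq_add] using
    norm_sub_le_mul_exp_of_integral_eq hF h.1 hhat.1 (hautonomous h) (hautonomous hhat) t ht

theorem isAux_of_intervalIntegrable {Jr : St → Ctrl → Fin p → ℝ} {r : ℝ → St} {u : ℝ → Ctrl}
    (z₀ : Fin p → ℝ) (h : IntervalIntegrable (fun s => Jr (r s) (u s)) volume (-tf) 0) :
    IsAux Jr tf r u z₀ (fun t => z₀ + ∫ s in t..0, Jr (r s) (u s)) :=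
  ⟨continuousOn_const.add ((intervalIntegral.continuousOn_primitive_interval_left
    ((intervalIntegrable_iff').mp h)).mono Icc_subset_uIcc), by simp, fun _ _ => rfl⟩

theorem IsAux.norm_sub_le_add_integral {Jr : St → Ctrl → Fin p → ℝ} {Lr : ℝ}
    (hJr_lip : ∀ a b c, c ∈ ctrlSet Tmax → ‖Jr a c - Jr b c‖ ≤ Lr * ‖a - b‖) (htf : 0 ≤ tf)
    {r rhat : ℝ → St} {u : ℝ → Ctrl} (hu : ∀ t, u t ∈ ctrlSet Tmax) {z zhat : ℝ → Fin p → ℝ}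
    {z₀ zhat₀ : Fin p → ℝ} (hz : IsAux Jr tf r u z₀ z) (hzhat : IsAux Jr tf rhat u zhat₀ zhat)
    (hi : IntervalIntegrable (fun s => Jr (r s) (u s)) volume (-tf) 0)
    (hihat : IntervalIntegrable (fun s => Jr (rhat s) (u s)) volume (-tf) 0)
    {ρ : ℝ → ℝ} (hρ : IntervalIntegrable ρ volume (-tf) 0)
    (hdist : ∀ s ∈ Icc (-tf) 0, ‖r s - rhat s‖ ≤ ρ s) :
    ‖z (-tf) - zhat (-tf)‖ ≤ ‖z₀ - zhat₀‖ + Lr * ∫ s in (-tf)..0, ρ s := by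
  have hLr : 0 ≤ Lr := nonneg_of_norm_sub_le_mul fun a b => hJr_lip a b _ (hu 0)
  have hle : -tf ≤ 0 := neg_nonpos.mpr htf
  have hdiff : ‖∫ s in (-tf)..0, (Jr (r s) (u s) - Jr (rhat s) (u s))‖ ≤
      ∫ s in (-tf)..0, Lr * ρ s :=
    intervalIntegral.norm_integral_le_of_norm_le hle (ae_of_all _ fun s hs =>
      (hJr_lip _ _ _ (hu s)).trans
        (mul_le_mul_of_nonneg_left (hdist s (Ioc_subset_Icc_self hs)) hLr)) (hρ.const_mul Lr)
  rw [hz.2.2 _ (left_mem_Icc.mpr hle), hzhat.2.2 _ (left_mem_Icc.mpr hle),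
    ← intervalIntegral.integral_const_mul, add_sub_add_comm,
    ← intervalIntegral.integral_sub hi hihat]
  exact (norm_add_le _ _).trans (add_le_add le_rfl hdiff)

end ControlSystem

section Cost

variable {p : ℕ} {g ν : St → ℝ} {Jt : St → Fin p → ℝ} {tf : ℝ}

theorem le_auxCost (hg : Continuous g) (htf : 0 ≤ tf) {r : ℝ → St}
    (hr : ContinuousOn r (Icc (-tf) 0)) (z : ℝ → Fin p → ℝ) : g (r (-tf)) ≤ auxCost g ν Jt tf r z :=
  (le_csSup (isCompact_Icc.image_of_continuousOn (hg.comp_continuousOn hr)).bddAbove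
    (mem_image_of_mem _ (left_mem_Icc.mpr (neg_nonpos.mpr htf)))).trans
    ((le_max_right _ _).trans (le_max_right _ _))

theorem auxCost_le_add {Lg Lν Lt : ℝ} (hg_lip : ∀ a b, |g a - g b| ≤ Lg * ‖a - b‖)
    (hν_lip : ∀ a b, |ν a - ν b| ≤ Lν * ‖a - b‖) (hJt_lip : ∀ a b, ‖Jt a - Jt b‖ ≤ Lt * ‖a - b‖)
    (htf : 0 ≤ tf) {r rhat : ℝ → St} (hrhat : ContinuousOn rhat (Icc (-tf) 0))
    {z zhat : ℝ → Fin p → ℝ} {ε η : ℝ} (hr : ∀ s ∈ Icc (-tf) 0, ‖r s - rhat s‖ ≤ ε)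
    (hz : ‖z (-tf) - zhat (-tf)‖ ≤ η) :
    auxCost g ν Jt tf r z ≤
      auxCost g ν Jt tf rhat zhat + max (Lg * ε) (max (Lν * ε) (Lt * ε + η)) := by
  have hlip : ∀ {φ : St → ℝ} {L : ℝ}, (∀ a b, |φ a - φ b| ≤ L * ‖a - b‖) →
      ∀ s ∈ Icc (-tf) 0, φ (r s) ≤ φ (rhat s) + L * ε := fun {φ L} hφ s hs => by
    have hL := nonneg_of_norm_sub_le_mul fun a b => (Real.norm_eq_abs _).trans_le (hφ a b)
    linarith [le_abs_self (φ (r s) - φ (rhat s)), hφ (r s) (rhat s),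
      mul_le_mul_of_nonneg_left (hr s hs) hL]
  have hmem : (0 : ℝ) ∈ Icc (-tf) 0 := right_mem_Icc.mpr (neg_nonpos.mpr htf)
  have hJt : ⨆ i, (Jt (r 0) i - z (-tf) i) ≤
      (⨆ i, (Jt (rhat 0) i - zhat (-tf) i)) + (Lt * ε + η) := by
    refine (iSup_le_iSup_add_norm_sub (Jt (r 0) - z (-tf)) (Jt (rhat 0) - zhat (-tf))).trans ?_
    have hLt := nonneg_of_norm_sub_le_mul hJt_lip
    rw [sub_sub_sub_comm]
    exact add_le_add le_rfl ((norm_sub_le _ _).trans (add_le_add ((hJt_lip _ _).trans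
      (mul_le_mul_of_nonneg_left (hr 0 hmem) hLt)) hz))
  have hsup : sSup ((fun s => g (r s)) '' Icc (-tf) 0) ≤
      sSup ((fun s => g (rhat s)) '' Icc (-tf) 0) + Lg * ε := by
    have hg := continuous_of_norm_sub_le_mul fun a b => (Real.norm_eq_abs _).trans_le (hg_lip a b)
    have hbdd := (isCompact_Icc.image_of_continuousOn (hg.comp_continuousOn hrhat)).bddAbove
    refine csSup_le ((nonempty_Icc.mpr (neg_nonpos.mpr htf)).image _)
      (forall_mem_image.mpr fun s hs => ?_)
    exact (hlip hg_lip s hs).trans (add_le_add (le_csSup hbdd (mem_image_of_mem _ hs)) le_rfl)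
  unfold auxCost
  rw [← max_add_add_right, ← max_add_add_right]
  refine max_le_max (hJt.trans ?_)
    (max_le_max ((hlip hν_lip 0 hmem).trans ?_) (hsup.trans ?_)) <;> gcongr
  exacts [(le_max_right _ _).trans (le_max_right _ _),
    (le_max_left _ _).trans (le_max_right _ _), le_max_left _ _]

end Cost

section Value

variable {p : ℕ} {f : St → Ctrl → St} {Tmax Lf Lg Lν Lt Lr : ℝ} {g ν : St → ℝ}
  {Jt : St → Fin p → ℝ} {Jr : St → Ctrl → Fin p → ℝ} {tf : ℝ}

theorem exists_isAux_auxCost_le_add (hLf : 0 < Lf)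
    (hf_lip : ∀ r₁ r₂ u₁ u₂, u₁ ∈ ctrlSet Tmax → u₂ ∈ ctrlSet Tmax →
      ‖f r₁ u₁ - f r₂ u₂‖ ≤ Lf * ‖r₁ - r₂‖)
    (hg_lip : ∀ a b, |g a - g b| ≤ Lg * ‖a - b‖)
    (hν_lip : ∀ a b, |ν a - ν b| ≤ Lν * ‖a - b‖)
    (hJt_lip : ∀ a b, ‖Jt a - Jt b‖ ≤ Lt * ‖a - b‖)
    (hJr_cont : ContinuousOn (fun q : St × Ctrl => Jr q.1 q.2) (univ ×ˢ ctrlSet Tmax))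
    (hJr_lip : ∀ a b c, c ∈ ctrlSet Tmax → ‖Jr a c - Jr b c‖ ≤ Lr * ‖a - b‖)
    (htf : 0 ≤ tf) {r₀ rhat₀ : St} (z₀ : Fin p → ℝ) {zhat₀ : Fin p → ℝ} {r rhat : ℝ → St}
    {u uhat : ℝ → Ctrl} {zhat : ℝ → Fin p → ℝ} (hr : IsTraj f Tmax r₀ tf r u)
    (hrhat : IsTraj f Tmax rhat₀ tf rhat uhat) (hzhat : IsAux Jr tf rhat uhat zhat₀ zhat) :
    ∃ z, IsTraj f Tmax r₀ tf r uhat ∧ IsAux Jr tf r uhat z₀ z ∧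
      auxCost g ν Jt tf r z ≤ auxCost g ν Jt tf rhat zhat +
        (max (Lg * exp (tf * Lf)) (max (Lν * exp (tf * Lf))
          (Lt * exp (tf * Lf) + Lr * (exp (tf * Lf) - 1) / Lf)) * ‖r₀ - rhat₀‖ + ‖z₀ - zhat₀‖) := by
  set e := exp (tf * Lf)
  set δr := ‖r₀ - rhat₀‖
  set δz := ‖z₀ - zhat₀‖
  have hr' := hr.replace_ctrl hf_lip hrhat.2.1 hrhat.2.2.1
  have hdist := hr'.norm_sub_le_mul_exp hf_lip hrhat
  have hdist_e : ∀ s ∈ Icc (-tf) 0, ‖r s - rhat s‖ ≤ δr * e := fun s hs =>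
    (hdist s hs).trans (mul_le_mul_of_nonneg_left (exp_le_exp.mpr (by nlinarith [hs.2]))
      (norm_nonneg _))
  have hint : ∀ {q : ℝ → St}, ContinuousOn q (Icc (-tf) 0) →
      IntervalIntegrable (fun s => Jr (q s) (uhat s)) volume (-tf) 0 := fun hq =>
    (intervalIntegrable_iff_integrableOn_Icc_of_le (neg_nonpos.mpr htf)).mpr
      (isCompact_Icc.integrableOn_comp_of_continuousOn_prod (isCompact_ctrlSet Tmax) hJr_cont hq
        hrhat.2.1 hrhat.2.2.1)
  have hz := isAux_of_intervalIntegrable z₀ (hint hr.1)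
  have hzdist := hz.norm_sub_le_add_integral hJr_lip htf hrhat.2.2.1 hzhat (hint hr.1)
    (hint hrhat.1) (ρ := fun s => δr * exp (Lf * (s + tf)))
    ((by fun_prop : Continuous fun s => δr * exp (Lf * (s + tf))).intervalIntegrable _ _) hdist
  rw [intervalIntegral.integral_const_mul, integral_exp_mul_add_eq hLf.ne'] at hzdist
  change _ ≤ δz + Lr * (δr * ((e - 1) / Lf)) at hzdist
  refine ⟨_, hr', hz, (auxCost_le_add hg_lip hν_lip hJt_lip htf hrhat.1 hdist_e hzdist).trans
    (add_le_add le_rfl ?_)⟩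
  set C := max (Lg * e) (max (Lν * e) (Lt * e + Lr * (e - 1) / Lf))
  have hC : ∀ {x}, x ≤ C → x * δr ≤ C * δr := fun hx =>
    mul_le_mul_of_nonneg_right hx (norm_nonneg _)
  have hδz : 0 ≤ δz := norm_nonneg _
  refine max_le ?_ (max_le ?_ ?_)
  · linarith [hC (le_max_left (Lg * e) _)]
  · linarith [hC ((le_max_left (Lν * e) _).trans (le_max_right (Lg * e) _))]
  · have hCt := hC ((le_max_right (Lν * e) _).trans (le_max_right (Lg * e) _))
    linarith [show Lr * (e - 1) / Lf * δr = Lr * (δr * ((e - 1) / Lf)) by ring]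

theorem auxValueFn_le_add (hLf : 0 < Lf)
    (hf_lip : ∀ r₁ r₂ u₁ u₂, u₁ ∈ ctrlSet Tmax → u₂ ∈ ctrlSet Tmax →
      ‖f r₁ u₁ - f r₂ u₂‖ ≤ Lf * ‖r₁ - r₂‖)
    (hg_lip : ∀ a b, |g a - g b| ≤ Lg * ‖a - b‖)
    (hν_lip : ∀ a b, |ν a - ν b| ≤ Lν * ‖a - b‖)
    (hJt_lip : ∀ a b, ‖Jt a - Jt b‖ ≤ Lt * ‖a - b‖)
    (hJr_cont : ContinuousOn (fun q : St × Ctrl => Jr q.1 q.2) (univ ×ˢ ctrlSet Tmax))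
    (hJr_lip : ∀ a b c, c ∈ ctrlSet Tmax → ‖Jr a c - Jr b c‖ ≤ Lr * ‖a - b‖)
    (hne : ∀ (r₀ : St) (tf : ℝ) (z₀ : Fin p → ℝ), 0 ≤ tf →
      ∃ r u z, IsTraj f Tmax r₀ tf r u ∧ IsAux Jr tf r u z₀ z)
    (htf : 0 ≤ tf) (r₀ rhat₀ : St) (z₀ zhat₀ : Fin p → ℝ) :
    auxValueFn f Tmax g ν Jt Jr r₀ tf z₀ ≤ auxValueFn f Tmax g ν Jt Jr rhat₀ tf zhat₀ +
      (max (Lg * exp (tf * Lf)) (max (Lν * exp (tf * Lf))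
        (Lt * exp (tf * Lf) + Lr * (exp (tf * Lf) - 1) / Lf)) * ‖r₀ - rhat₀‖ + ‖z₀ - zhat₀‖) := by
  have hg := continuous_of_norm_sub_le_mul fun a b => (Real.norm_eq_abs _).trans_le (hg_lip a b)
  obtain ⟨r, u, -, hr, -⟩ := hne r₀ tf z₀ htf
  obtain ⟨rhat, uhat, zhat, hrhat, hzhat⟩ := hne rhat₀ tf zhat₀ htf
  refine csInf_le_csInf_add ⟨g r₀, ?_⟩ ⟨_, rhat, uhat, zhat, hrhat, hzhat, rfl⟩ ?_
  · rintro _ ⟨r', u', z', hr', -, rfl⟩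
    simpa only [hr'.2.2.2.1] using le_auxCost hg htf hr'.1 z'
  · rintro _ ⟨rhat, uhat, zhat, hrhat, hzhat, rfl⟩
    obtain ⟨z, hr', hz, hcost⟩ := exists_isAux_auxCost_le_add hLf hf_lip hg_lip hν_lip hJt_lip
      hJr_cont hJr_lip htf z₀ hr hrhat hzhat
    exact ⟨_, ⟨r, uhat, z, hr', hz, rfl⟩, hcost⟩

end Value

theorem auxValue_lipschitz_general
    (p : ℕ)
    (f : St → Ctrl → St) (Tmax : ℝ) (Lf Lg Lν Lt Lr : ℝ) (g ν : St → ℝ)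
    (Jt : St → Fin p → ℝ) (Jr : St → Ctrl → Fin p → ℝ)
    (hLf : 0 < Lf)
    (hf_lip : ∀ r₁ r₂ u₁ u₂, u₁ ∈ ctrlSet Tmax → u₂ ∈ ctrlSet Tmax →
      ‖f r₁ u₁ - f r₂ u₂‖ ≤ Lf * ‖r₁ - r₂‖)
    (hg_lip : ∀ a b, |g a - g b| ≤ Lg * ‖a - b‖)
    (hν_lip : ∀ a b, |ν a - ν b| ≤ Lν * ‖a - b‖)
    (hJt_lip : ∀ a b, ‖Jt a - Jt b‖ ≤ Lt * ‖a - b‖)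
    (hJr_cont : ContinuousOn (fun q : St × Ctrl => Jr q.1 q.2) (univ ×ˢ ctrlSet Tmax))
    (hJr_lip : ∀ a b c, c ∈ ctrlSet Tmax → ‖Jr a c - Jr b c‖ ≤ Lr * ‖a - b‖)
    (hne : ∀ (r₀ : St) (tf : ℝ) (z₀ : Fin p → ℝ), 0 ≤ tf →
      ∃ r u z, IsTraj f Tmax r₀ tf r u ∧ IsAux Jr tf r u z₀ z)
    (tf : ℝ) (htf : 0 ≤ tf) :
    ∀ (r₀ rhat₀ : St) (z₀ zhat₀ : Fin p → ℝ),
      |auxValueFn f Tmax g ν Jt Jr r₀ tf z₀ - auxValueFn f Tmax g ν Jt Jr rhat₀ tf zhat₀| ≤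
        max (Lg * Real.exp (tf * Lf))
          (max (Lν * Real.exp (tf * Lf))
            (Lt * Real.exp (tf * Lf) + Lr * (Real.exp (tf * Lf) - 1) / Lf)) *
          ‖r₀ - rhat₀‖ + ‖z₀ - zhat₀‖ := by
  intro r₀ rhat₀ z₀ zhat₀
  have h := auxValueFn_le_add hLf hf_lip hg_lip hν_lip hJt_lip hJr_cont hJr_lip hne htf
  have h₁ := h r₀ rhat₀ z₀ zhat₀
  have h₂ := h rhat₀ r₀ zhat₀ z₀
  rw [norm_sub_rev rhat₀, norm_sub_rev zhat₀] at h₂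
  exact abs_sub_le_iff.mpr ⟨by linarith, by linarith⟩

/-- Proposition 2: Lipschitz continuity of the auxiliary value function. -/
theorem auxValue_lipschitz
    (p : ℕ) (hp : 0 < p)
    (f : St → Ctrl → St) (Tmax : ℝ) (Lf Lg Lν Lt Lr : ℝ) (g ν : St → ℝ)
    (Jt : St → Fin p → ℝ) (Jr : St → Ctrl → Fin p → ℝ)
    (hLf : 0 < Lf)
    (hf_bdd : ∃ M, ∀ r u, ‖f r u‖ ≤ M)
    (hf_lip : ∀ r₁ r₂ u₁ u₂, u₁ ∈ ctrlSet Tmax → u₂ ∈ ctrlSet Tmax →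
      ‖f r₁ u₁ - f r₂ u₂‖ ≤ Lf * ‖r₁ - r₂‖)
    (hg_lip : ∀ a b, |g a - g b| ≤ Lg * ‖a - b‖)
    (hν_lip : ∀ a b, |ν a - ν b| ≤ Lν * ‖a - b‖)
    (hJt_lip : ∀ a b, ‖Jt a - Jt b‖ ≤ Lt * ‖a - b‖)
    (hJr_cont : ContinuousOn (fun q : St × Ctrl => Jr q.1 q.2) (univ ×ˢ ctrlSet Tmax))
    (hJr_lip : ∀ a b c, c ∈ ctrlSet Tmax → ‖Jr a c - Jr b c‖ ≤ Lr * ‖a - b‖)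
    (hne : ∀ (r₀ : St) (tf : ℝ) (z₀ : Fin p → ℝ), 0 ≤ tf →
      ∃ r u z, IsTraj f Tmax r₀ tf r u ∧ IsAux Jr tf r u z₀ z)
    (tf : ℝ) (htf : 0 ≤ tf) :
    ∀ (r₀ rhat₀ : St) (z₀ zhat₀ : Fin p → ℝ),
      |auxValueFn f Tmax g ν Jt Jr r₀ tf z₀ - auxValueFn f Tmax g ν Jt Jr rhat₀ tf zhat₀| ≤
        max (Lg * Real.exp (tf * Lf))
          (max (Lν * Real.exp (tf * Lf))
            (Lt * Real.exp (tf * Lf) + Lr * (Real.exp (tf * Lf) - 1) / Lf)) *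
          ‖r₀ - rhat₀‖ + ‖z₀ - zhat₀‖ :=
  auxValue_lipschitz_general p f Tmax Lf Lg Lν Lt Lr g ν Jt Jr hLf hf_lip hg_lip hν_lip hJt_lip
    hJr_cont hJr_lip hne tf htf
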